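/- arXiv:1404.6365 — 10 statements merged into one kernel-verified Lean document; each statement's English description precedes it below -/
import Mathlib

section
/- Let (G,H,α,τ) be a crossed module. On the semidirect product H ⋊_α G, with product (h₂,g₂)(h₁,g₁) = (h₂ α(g₂)(h₁), g₂g₁), define the partial composition (h',g')∘(h,g) = (h'h, g), defined exactly when g' = τ(h)g. Then the exchange law holds: for all h₁, h₂, h₁', h₂' ∈ H and g₁, g₂ ∈ G, setting g₁' = τ(h₁)g₁ and g₂' = τ(h₂)g₂, the composite ((h₂',g₂')(h₁',g₁')) ∘ ((h₂,g₂)(h₁,g₁)) is defined and equals ((h₂',g₂')∘(h₂,g₂)) · ((h₁',g₁')∘(h₁,g₁)); equivalently, h₂' α(g₂')(h₁') h₂ α(g₂)(h₁) = h₂' h₂ α(g₂)(h₁' h₁). -/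
/-- For a crossed module `(G,H,α,τ)`, on the semidirect product
`H ⋊_α G` with product `(h₂,g₂)(h₁,g₁) = (h₂ α(g₂)(h₁), g₂g₁)` and partial composition
`(h',g')∘(h,g) = (h'h,g)` defined exactly when `g' = τ(h)g`, the exchange law holds:
with `g₁' = τ(h₁)g₁` and `g₂' = τ(h₂)g₂`, the composite
`((h₂',g₂')(h₁',g₁')) ∘ ((h₂,g₂)(h₁,g₁))` is defined (first conjunct: the source of the
left product equals the target of the right product) and equals
`((h₂',g₂')∘(h₂,g₂)) · ((h₁',g₁')∘(h₁,g₁))` (second conjunct, comparing first components;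
the second components are both `g₂ * g₁`). -/
theorem crossed_module_exchange_law {G H : Type*} [Group G] [Group H]
    (α : G →* MulAut H) (τ : H →* G)
    (peiffer1 : ∀ (g : G) (h : H), τ (α g h) = g * τ h * g⁻¹)
    (peiffer2 : ∀ h h' : H, α (τ h) h' = h * h' * h⁻¹)
    (h₁ h₂ h₁' h₂' : H) (g₁ g₂ : G)
    (g₁' : G) (hg₁' : g₁' = τ h₁ * g₁)
    (g₂' : G) (hg₂' : g₂' = τ h₂ * g₂) :
    -- the composite is defined:
    g₂' * g₁' = τ (h₂ * α g₂ h₁) * (g₂ * g₁) ∧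
    -- and the exchange law holds:
    h₂' * α g₂' h₁' * (h₂ * α g₂ h₁) = (h₂' * h₂) * α g₂ (h₁' * h₁) := by
  subst hg₁' hg₂'
  constructor
  · simp [peiffer1, map_mul, mul_assoc]
  · simp [map_mul, peiffer2, mul_assoc]
end

section
/- Let (G,H,α,τ) be a crossed module with associated categorical group 𝐆, let V be a vector space, and let D : G → GL(V) be a representation. Let 𝐕 be the category whose objects are the elements of V and whose morphisms are pairs (f,u) with f ∈ End(V) and u ∈ V, with source u, target f(u), and composition (f',u')∘(f,u) = (f'∘f, u) defined when u' = f(u). Define ρ(g, u) = D_g(u) on objects, and on morphisms ρ((h,g), (f,u)) = (D_{τ(h)g} ∘ f ∘ D_g⁻¹, D_g(u)). Then ρ is an action of 𝐆 on 𝐕: (a) ρ respects sources and targets, i.e. the source of ρ((h,g),(f,u)) is D_g(u) and its target is D_{τ(h)g}(f(u)); (b) ρ((h₂,g₂)∘(h₁,g₁), (f₂,u₂)∘(f₁,u₁)) = ρ((h₂,g₂),(f₂,u₂)) ∘ ρ((h₁,g₁),(f₁,u₁)) whenever g₂ = τ(h₁)g₁ and u₂ = f₁(u₁); and (c) ρ((h₂,g₂)(h₁,g₁),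 (f,u)) = ρ((h₂,g₂), ρ((h₁,g₁), (f,u))) for all (h₁,g₁), (h₂,g₂) ∈ H ⋊_α G (group product on the left). -/
/-- Let `(G,H,α,τ)` be a crossed module, `V` a vector space over a
field `𝕜`, and `D : G → GL(V)` a representation.  Let `𝐕` be the category with objects
`V` and morphisms pairs `(f,u)` with `f ∈ End(V)`, `u ∈ V`, source `u`, target `f(u)`,
and composition `(f',u')∘(f,u) = (f'∘f, u)` when `u' = f(u)`.  Define `ρ` on objects by
`ρ(g,u) = D_g u` and on morphisms by `ρ((h,g),(f,u)) = (D_{τ(h)g} ∘ f ∘ D_g⁻¹, D_g u)`.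
Then `ρ` is an action of the associated categorical group on `𝐕`:
(a) it respects sources and targets; (b) it respects composition of morphisms; and
(c) it gives an action of the morphism group `H ⋊_α G`
(with product `(h₂,g₂)(h₁,g₁) = (h₂ α(g₂)(h₁), g₂g₁)`). -/
theorem crossed_module_rep_action {G H : Type*} [Group G] [Group H]
    {𝕜 V : Type*} [Field 𝕜] [AddCommGroup V] [Module 𝕜 V]
    (α : G →* MulAut H) (τ : H →* G)
    (peiffer1 : ∀ (g : G) (h : H), τ (α g h) = g * τ h * g⁻¹)
    (peiffer2 : ∀ h h' : H, α (τ h) h' = h * h' * h⁻¹)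
    (D : G →* (V ≃ₗ[𝕜] V)) :
    -- ρ on morphisms:
    let ρm : H × G → (V →ₗ[𝕜] V) × V → (V →ₗ[𝕜] V) × V :=
      fun k x => ((D (τ k.1 * k.2) : V →ₗ[𝕜] V) ∘ₗ x.1 ∘ₗ (D k.2⁻¹ : V →ₗ[𝕜] V),
        D k.2 x.2)
    -- (a) ρ respects sources and targets
    (∀ (h : H) (g : G) (f : V →ₗ[𝕜] V) (u : V),
      (ρm (h, g) (f, u)).2 = D g u ∧
      (ρm (h, g) (f, u)).1 (D g u) = D (τ h * g) (f u)) ∧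
    -- (b) ρ respects composition of morphisms
    (∀ (h₁ h₂ : H) (g₁ g₂ : G) (f₁ f₂ : V →ₗ[𝕜] V) (u₁ u₂ : V),
      g₂ = τ h₁ * g₁ → u₂ = f₁ u₁ →
      ρm (h₂ * h₁, g₁) (f₂ ∘ₗ f₁, u₁) =
        ((ρm (h₂, g₂) (f₂, u₂)).1 ∘ₗ (ρm (h₁, g₁) (f₁, u₁)).1,
          (ρm (h₁, g₁) (f₁, u₁)).2)) ∧
    -- (c) ρ is an action of the group H ⋊_α G
    (∀ (h₁ h₂ : H) (g₁ g₂ : G) (f : V →ₗ[𝕜] V) (u : V),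
      ρm (h₂ * α g₂ h₁, g₂ * g₁) (f, u) = ρm (h₂, g₂) (ρm (h₁, g₁) (f, u))) ∧
    (∀ (f : V →ₗ[𝕜] V) (u : V), ρm (1, 1) (f, u) = (f, u)) := by
  intro ρm
  have e0 : ∀ (a b : V ≃ₗ[𝕜] V) (x : V), (a * b) x = a (b x) := fun _ _ _ => rfl
  have e1 : ∀ (a b : G) (x : V), D (a * b) x = D a (D b x) := fun a b x => by
    simp [map_mul, e0]
  have e2 : ∀ (a : G) (x : V), D a⁻¹ (D a x) = x := fun a x => by
    rw [← e1]; simp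
  have e3 : ∀ (a : G) (x : V), D a (D a⁻¹ x) = x := fun a x => by
    rw [← e1]; simp
  refine ⟨?_, ?_, ?_, ?_⟩
  · intro h g f u
    refine ⟨rfl, ?_⟩
    simp only [ρm, LinearMap.comp_apply, LinearEquiv.coe_coe, e1, e2, e0, mul_inv_rev]
  · intro h₁ h₂ g₁ g₂ f₁ f₂ u₁ u₂ hg hu
    subst hg hu
    refine Prod.ext ?_ rfl
    ext x
    simp only [ρm, LinearMap.comp_apply, LinearEquiv.coe_coe, mul_inv_rev, e1, e2, e3,
      map_mul, mul_assoc, e0]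
  · intro h₁ h₂ g₁ g₂ f u
    refine Prod.ext ?_ ?_
    · ext x
      simp only [ρm, LinearMap.comp_apply, LinearEquiv.coe_coe, map_mul, peiffer1,
        mul_inv_rev, mul_assoc, e1, e2, e3, e0]
    · simp only [ρm, e1]
  · intro f u
    refine Prod.ext ?_ ?_
    · ext x; simp [ρm, Module.End.mul_apply]
    · simp [ρm]
end

section
/- Let A and B be categories and let η be a twisting map for (A,B). Then there is a category A ⋊_η B, the semidirect product of A and B with respect to η, with objects Obj(A) × Obj(B), Hom((a₁,b₁),(a₂,b₂)) = Hom_A(a₁,a₂) × Hom_B(b₁,b₂), identity morphisms (1_a, 1_b), and composition (k₂,f₂)∘_η(k₁,f₁) = (η(k₂,f₁)∘k₁, f₂∘f₁): this composition is well-typed, associative, and has the (1_a,1_b) as identities. -/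
/-- A (small) category presented by an object set `O`, a morphism set `M`, source and
target maps, an identity-assigning map, and a (total) composition function whose
category axioms are only required on composable pairs.  `comp g f` denotes `g ∘ f`. -/
structure PreCat (O : Type*) (M : Type*) where
  src : M → O
  tgt : M → O
  ide : O → M
  comp : M → M → M
  src_ide : ∀ v, src (ide v) = v
  tgt_ide : ∀ v, tgt (ide v) = v
  src_comp : ∀ f g, src g = tgt f → src (comp g f) = src f
  tgt_comp : ∀ f g, src g = tgt f → tgt (comp g f) = tgt g
  comp_ide : ∀ f, comp f (ide (src f)) = f
  ide_comp : ∀ f, comp (ide (tgt f)) f = f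
  comp_assoc : ∀ f g h, src g = tgt f → src h = tgt g →
    comp (comp h g) f = comp h (comp g f)

/-- A categorical group: a category whose object set and morphism set are groups, the
source, target and identity-assigning maps are group homomorphisms, and the exchange law
`(g'f')∘(gf) = (g'∘g)(f'∘f)` holds whenever `g'∘g` and `f'∘f` are defined. -/
structure CatGroup (O : Type*) (M : Type*) [Group O] [Group M] extends PreCat O M where
  src_mul : ∀ a b : M, src (a * b) = src a * src b
  tgt_mul : ∀ a b : M, tgt (a * b) = tgt a * tgt b
  ide_mul : ∀ a b : O, ide (a * b) = ide a * ide b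
  exchange : ∀ f f' g g' : M, src g' = tgt g → src f' = tgt f →
    comp (g' * f') (g * f) = comp g' g * comp f' f

/-- A twisting map `η` for a pair of categories `(A, B)`:  `η(k,f)` has the same source
and target as `k`; `η` is a right action with respect to composition in `B` and respects
composition in `A` and identities. -/
structure IsTwist {OA MA OB MB : Type*} (A : PreCat OA MA) (B : PreCat OB MB)
    (η : MA → MB → MA) : Prop where
  src_eq : ∀ k f, A.src (η k f) = A.src k
  tgt_eq : ∀ k f, A.tgt (η k f) = A.tgt k
  comp_right : ∀ k f₁ f₂, B.src f₂ = B.tgt f₁ → η k (B.comp f₂ f₁) = η (η k f₂) f₁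
  ide_right : ∀ k b, η k (B.ide b) = k
  comp_left : ∀ k₁ k₂ f, A.src k₂ = A.tgt k₁ →
    η (A.comp k₂ k₁) f = A.comp (η k₂ f) (η k₁ f)
  ide_left : ∀ a f, η (A.ide a) f = A.ide a

/-- Given categories `A`, `B` and a twisting map `η` for `(A,B)`, the
semidirect product `A ⋊_η B` is a category: its objects are `Obj(A) × Obj(B)`, its
morphisms are pairs of morphisms, identities are `(1_a, 1_b)`, and the composition
`(k₂,f₂)∘_η(k₁,f₁) = (η(k₂,f₁)∘k₁, f₂∘f₁)` is well-typed, associative, and has the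
`(1_a, 1_b)` as identities. -/
theorem semidirect_product_category {OA MA OB MB : Type*}
    (A : PreCat OA MA) (B : PreCat OB MB)
    (η : MA → MB → MA) (hη : IsTwist A B η) :
    -- the composition is well-typed: source and target of the composite
    (∀ k₁ k₂ f₁ f₂, A.src k₂ = A.tgt k₁ → B.src f₂ = B.tgt f₁ →
      A.src (A.comp (η k₂ f₁) k₁) = A.src k₁ ∧
      A.tgt (A.comp (η k₂ f₁) k₁) = A.tgt k₂ ∧
      B.src (B.comp f₂ f₁) = B.src f₁ ∧ B.tgt (B.comp f₂ f₁) = B.tgt f₂) ∧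
    -- associativity: (k₃,f₃)∘_η((k₂,f₂)∘_η(k₁,f₁)) = ((k₃,f₃)∘_η(k₂,f₂))∘_η(k₁,f₁)
    (∀ k₁ k₂ k₃ f₁ f₂ f₃,
      A.src k₂ = A.tgt k₁ → A.src k₃ = A.tgt k₂ →
      B.src f₂ = B.tgt f₁ → B.src f₃ = B.tgt f₂ →
      ((A.comp (η k₃ (B.comp f₂ f₁)) (A.comp (η k₂ f₁) k₁),
          B.comp f₃ (B.comp f₂ f₁)) : MA × MB) =
        (A.comp (η (A.comp (η k₃ f₂) k₂) f₁) k₁, B.comp (B.comp f₃ f₂) f₁)) ∧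
    -- (1_a, 1_b) are identities
    (∀ (k : MA) (f : MB),
      ((A.comp (η k (B.ide (B.src f))) (A.ide (A.src k)),
          B.comp f (B.ide (B.src f))) : MA × MB) = (k, f) ∧
      ((A.comp (η (A.ide (A.tgt k)) f) k, B.comp (B.ide (B.tgt f)) f) : MA × MB) =
        (k, f)) := by
  refine ⟨?_, ?_, ?_⟩
  · intro k₁ k₂ f₁ f₂ hk hf
    refine ⟨A.src_comp _ _ ?_, A.tgt_comp _ _ ?_ |>.trans (hη.tgt_eq k₂ f₁),
      B.src_comp _ _ hf, B.tgt_comp _ _ hf⟩ <;>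
      rw [hη.src_eq, hk]
  · intro k₁ k₂ k₃ f₁ f₂ f₃ hk12 hk23 hf12 hf23
    have h1 : A.src (η k₃ f₂) = A.tgt k₂ := by rw [hη.src_eq, hk23]
    rw [Prod.mk.injEq]
    constructor
    · rw [hη.comp_left _ _ _ h1, hη.comp_right _ _ _ hf12,
        A.comp_assoc k₁ (η k₂ f₁) (η (η k₃ f₂) f₁)
          (by rw [hη.src_eq, hk12]) (by rw [hη.src_eq, hη.tgt_eq, hη.src_eq, hk23])]
    · rw [B.comp_assoc _ _ _ hf12 hf23]
  · intro k f
    constructor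
    · rw [Prod.mk.injEq, hη.ide_right, A.comp_ide, B.comp_ide]; exact ⟨rfl, rfl⟩
    · rw [Prod.mk.injEq, hη.ide_left, A.ide_comp, B.ide_comp]; exact ⟨rfl, rfl⟩
end

section
/- Let (G,H,α,τ) be a crossed module with associated categorical group 𝐆, let V be a vector space, and let μ : GL(V) → H be a group homomorphism whose image lies in the kernel of τ (i.e. τ(μ(f)) = e for all f ∈ GL(V)). Define η((h,g), f) = (μ(f)⁻¹ h μ(f), g) for (h,g) ∈ H ⋊_α G and f ∈ GL(V). Then: (a) η((h,g),f) has the same source and target as (h,g), i.e. τ(μ(f)⁻¹ h μ(f)) g = τ(h) g; (b) η((h,g), f₂∘f₁) = η(η((h,g), f₂), f₁) for all f₁, f₂ ∈ GL(V); (c) η((h',g')∘(h,g), f) = η((h',g'), f) ∘ η((h,g), f) whenever g' = τ(h)g; and (d) η((h,g), id_V) = (h,g). Hence η is a twisting map defining a semidirect product category 𝐆 ⋊_η 𝐂(V), whose composition is ((h₂,g₂); f₂) ∘_η ((h₁,g₁); f₁) = ((μ(f₁)⁻¹ h₂ μ(f₁) h₁, g₁); f₂∘f₁). -/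
/-- Let `(G,H,α,τ)` be a crossed module with associated categorical
group `𝐆` (morphism group `H ⋊_α G`, source `(h,g) ↦ g`, target `(h,g) ↦ τ(h)g`,
composition `(h',g')∘(h,g) = (h'h, g)` when `g' = τ(h)g`), `V` a vector space over a
field `𝕜`, and `μ : GL(V) → H` a group homomorphism whose image lies in `ker τ`.
Define `η((h,g), f) = (μ(f)⁻¹ h μ(f), g)`.  Then `η` is a twisting map for
`(𝐆, 𝐂(V))`, where `𝐂(V)` is the one-object category with morphism group `GL(V)`
(so that `f₂ ∘ f₁ = f₂ * f₁`), and the composition of the resulting semidirect product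
category `𝐆 ⋊_η 𝐂(V)` is
`((h₂,g₂); f₂) ∘_η ((h₁,g₁); f₁) = ((μ(f₁)⁻¹ h₂ μ(f₁) h₁, g₁); f₂∘f₁)`. -/
theorem crossed_module_twist_by_GL {G H : Type*} [Group G] [Group H]
    {𝕜 V : Type*} [Field 𝕜] [AddCommGroup V] [Module 𝕜 V]
    (α : G →* MulAut H) (τ : H →* G)
    (peiffer1 : ∀ (g : G) (h : H), τ (α g h) = g * τ h * g⁻¹)
    (peiffer2 : ∀ h h' : H, α (τ h) h' = h * h' * h⁻¹)
    (μ : (V ≃ₗ[𝕜] V) →* H) (hμ : ∀ f : V ≃ₗ[𝕜] V, τ (μ f) = 1) :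
    let η : H × G → (V ≃ₗ[𝕜] V) → H × G := fun k f => ((μ f)⁻¹ * k.1 * μ f, k.2)
    -- (a) η(k,f) has the same source and target as k
    (∀ (h : H) (g : G) (f : V ≃ₗ[𝕜] V),
      (η (h, g) f).2 = g ∧ τ ((μ f)⁻¹ * h * μ f) * g = τ h * g) ∧
    -- (b) η is a right action for composition in 𝐂(V)
    (∀ (h : H) (g : G) (f₁ f₂ : V ≃ₗ[𝕜] V),
      η (h, g) (f₂ * f₁) = η (η (h, g) f₂) f₁) ∧
    -- (c) η respects composition in 𝐆
    (∀ (h h' : H) (g g' : G) (f : V ≃ₗ[𝕜] V), g' = τ h * g →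
      η (h' * h, g) f = (((η (h', g') f).1 * (η (h, g) f).1 : H), g)) ∧
    -- (d) η respects the identity of 𝐂(V)
    (∀ (h : H) (g : G), η (h, g) (1 : V ≃ₗ[𝕜] V) = (h, g)) ∧
    -- the composition of the semidirect product category 𝐆 ⋊_η 𝐂(V)
    (∀ (h₁ h₂ : H) (g₁ g₂ : G) (f₁ f₂ : V ≃ₗ[𝕜] V), g₂ = τ h₁ * g₁ →
      ((((η (h₂, g₂) f₁).1 * h₁, g₁), f₂ * f₁) : (H × G) × (V ≃ₗ[𝕜] V)) =
        (((μ f₁)⁻¹ * h₂ * μ f₁ * h₁, g₁), f₂ * f₁)) := by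
  intro η
  refine ⟨?_, ?_, ?_, ?_, ?_⟩
  · intro h g f
    refine ⟨rfl, ?_⟩
    simp [map_mul, hμ f]
  · intro h g f₁ f₂
    simp [η, map_mul, mul_assoc]
  · intro h h' g g' f _
    simp only [η]
    refine Prod.ext ?_ rfl
    group
  · intro h g
    simp [η]
  · intro h₁ h₂ g₁ g₂ f₁ f₂ _
    rfl
end

section
/- Let 𝐆 be a categorical group, V a category, and η a twisting map for (𝐆, V) satisfying moreover η(k·1_a, f) = η(k,f)·1_a and η(1_c·k, f) = 1_c·η(k,f) for all morphisms k of 𝐆, objects a, c of 𝐆, and morphisms f of V. Let ρ : 𝐆 ⋊_η V → V be an η-twisted action satisfying the invariance η(k, ρ(k',f)) = η(k, f) for all morphisms k, k' of 𝐆 and f of V. Then there is a double category over V whose morphisms are pairs (k,f) ∈ Mor(𝐆) × Mor(V) with source s(k,f) = f and target t(k,f) = ρ(k,f); vertical composition (k',f')∘(k,f) = (k'k, f), defined when f' = ρ(k,f); and horizontal composition (k₂,f₂)∘_h(k₁,f₁) = (η(k₂,f₁)∘k₁, f₂∘f₁), defined when the composites on the right are defined. In particular the source and target maps behave correctly under both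 compositions and the exchange law ((k₂',f₂')∘(k₂,f₂)) ∘_h ((k₁',f₁')∘(k₁,f₁)) = ((k₂',f₂')∘_h(k₁',f₁')) ∘ ((k₂,f₂)∘_h(k₁,f₁)) holds whenever all indicated composites are defined. -/
/-- An `η`-twisted action of a categorical group `G` on a category `V`: a functor
`ρ : G ⋊_η V → V` (given on objects by `ρo` and on morphisms by `ρm`) such that
`ρ(1_e, f) = f` and `ρ(k₂, ρ(k₁, f)) = ρ(k₂k₁, f)`. -/
structure IsTwistedAction {OG MG OV MV : Type*} [Group OG] [Group MG]
    (G : CatGroup OG MG) (V : PreCat OV MV) (η : MG → MV → MG)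
    (ρo : OG → OV → OV) (ρm : MG → MV → MV) : Prop where
  src_ρ : ∀ k f, V.src (ρm k f) = ρo (G.src k) (V.src f)
  tgt_ρ : ∀ k f, V.tgt (ρm k f) = ρo (G.tgt k) (V.tgt f)
  ide_ρ : ∀ g v, ρm (G.ide g) (V.ide v) = V.ide (ρo g v)
  comp_ρ : ∀ k₁ k₂ f₁ f₂, G.src k₂ = G.tgt k₁ → V.src f₂ = V.tgt f₁ →
    ρm (G.comp (η k₂ f₁) k₁) (V.comp f₂ f₁) = V.comp (ρm k₂ f₂) (ρm k₁ f₁)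
  one_ρ : ∀ f, ρm 1 f = f
  mul_ρ : ∀ k₁ k₂ f, ρm k₂ (ρm k₁ f) = ρm (k₂ * k₁) f

lemma eta_mul {OG MG OV MV : Type*} [Group OG] [Group MG]
    (G : CatGroup OG MG) (V : PreCat OV MV)
    (η : MG → MV → MG) (hη : IsTwist G.toPreCat V η)
    (hη_mul_ide : ∀ (k : MG) (a : OG) (f : MV), η (k * G.ide a) f = η k f * G.ide a)
    (hη_ide_mul : ∀ (c : OG) (k : MG) (f : MV), η (G.ide c * k) f = G.ide c * η k f)
    (a b : MG) (f : MV) : η (a * b) f = η a f * η b f := by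
  have hab : a * b = G.comp (a * G.ide (G.tgt b)) (G.ide (G.src a) * b) := by
    rw [G.exchange _ _ _ _ (by rw [G.tgt_ide]) (by rw [G.src_ide])]
    rw [G.comp_ide, G.ide_comp]
  rw [hab, hη.comp_left _ _ _ (by
    rw [G.src_mul, G.tgt_mul, G.src_ide, G.tgt_ide])]
  rw [hη_mul_ide, hη_ide_mul]
  rw [G.exchange _ _ _ _ (by rw [hη.src_eq, G.tgt_ide]) (by rw [G.src_ide, hη.tgt_eq])]
  have h1 : G.comp (η a f) (G.ide (G.src a)) = η a f := by
    rw [← hη.src_eq a f, G.comp_ide]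
  have h2 : G.comp (G.ide (G.tgt b)) (η b f) = η b f := by
    rw [← hη.tgt_eq b f, G.ide_comp]
  rw [h1, h2]

/-- Let `ρ` be an `η`-twisted action of a categorical group `G` on a
category `V`, where `η` satisfies moreover `η(k·1_a, f) = η(k,f)·1_a`,
`η(1_c·k, f) = 1_c·η(k,f)` and the invariance `η(k, ρ(k',f)) = η(k, f)`.  Then there is a
double category over `V` with morphisms `(k,f) ∈ Mor(G) × Mor(V)`, source `f`, target
`ρ(k,f)`, vertical composition `(k',f')∘(k,f) = (k'k, f)` when `f' = ρ(k,f)`, and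
horizontal composition `(k₂,f₂)∘ₕ(k₁,f₁) = (η(k₂,f₁)∘k₁, f₂∘f₁)`: source and target
behave correctly under both compositions and the exchange law holds whenever all
indicated composites are defined. -/
theorem twisted_action_gives_double_category {OG MG OV MV : Type*}
    [Group OG] [Group MG] (G : CatGroup OG MG) (V : PreCat OV MV)
    (η : MG → MV → MG) (hη : IsTwist G.toPreCat V η)
    (hη_mul_ide : ∀ (k : MG) (a : OG) (f : MV), η (k * G.ide a) f = η k f * G.ide a)
    (hη_ide_mul : ∀ (c : OG) (k : MG) (f : MV), η (G.ide c * k) f = G.ide c * η k f)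
    (ρo : OG → OV → OV) (ρm : MG → MV → MV)
    (act : IsTwistedAction G V η ρo ρm)
    (inv : ∀ (k k' : MG) (f : MV), η k (ρm k' f) = η k f) :
    -- target behaves correctly under vertical composition
    (∀ (k k' : MG) (f f' : MV), f' = ρm k f → ρm (k' * k) f = ρm k' f') ∧
    -- target behaves correctly under horizontal composition
    (∀ (k₁ k₂ : MG) (f₁ f₂ : MV), G.src k₂ = G.tgt k₁ → V.src f₂ = V.tgt f₁ →
      ρm (G.comp (η k₂ f₁) k₁) (V.comp f₂ f₁) = V.comp (ρm k₂ f₂) (ρm k₁ f₁)) ∧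
    -- the exchange law
    (∀ (k₁ k₂ k₁' k₂' : MG) (f₁ f₂ f₁' f₂' : MV),
      G.src k₂ = G.tgt k₁ → G.src k₂' = G.tgt k₁' → V.src f₂ = V.tgt f₁ →
      f₁' = ρm k₁ f₁ → f₂' = ρm k₂ f₂ →
      -- all indicated composites are defined:
      V.src f₂' = V.tgt f₁' ∧
      V.comp f₂' f₁' = ρm (G.comp (η k₂ f₁) k₁) (V.comp f₂ f₁) ∧
      -- and the exchange law holds:
      ((G.comp (η (k₂' * k₂) f₁) (k₁' * k₁), V.comp f₂ f₁) : MG × MV) =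
        (G.comp (η k₂' f₁') k₁' * G.comp (η k₂ f₁) k₁, V.comp f₂ f₁)) := by
  refine ⟨fun k k' f f' hf => ?_, fun k₁ k₂ f₁ f₂ h1 h2 => act.comp_ρ k₁ k₂ f₁ f₂ h1 h2,
    fun k₁ k₂ k₁' k₂' f₁ f₂ f₁' f₂' hG hG' hV hf₁ hf₂ => ?_⟩
  · rw [← act.mul_ρ, hf]
  · have hs : V.src f₂' = V.tgt f₁' := by
      rw [hf₁, hf₂, act.src_ρ, act.tgt_ρ, hG, hV]
    refine ⟨hs, ?_, ?_⟩
    · rw [hf₁, hf₂, act.comp_ρ k₁ k₂ f₁ f₂ hG hV]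
    · have he : η k₂' f₁' = η k₂' f₁ := by rw [hf₁, inv]
      have hmul := eta_mul G V η hη hη_mul_ide hη_ide_mul k₂' k₂ f₁
      rw [he, hmul, G.exchange _ _ _ _ (by rw [hη.src_eq]; exact hG')
        (by rw [hη.src_eq]; exact hG)]
end

section
/- Let 𝐆 be a categorical group, B a category, and η a twisting map for (𝐆, B) satisfying moreover η(k·1_a, f) = η(k,f)·1_a and η(1_c·k, f) = 1_c·η(k,f) for all morphisms k of 𝐆, objects a, c of 𝐆, and morphisms f of B (where · denotes the group product of Mor(𝐆) and 1_x the identity morphism at x). Then η respects the group product of Mor(𝐆): η(k₂·k₁, f) = η(k₂,f)·η(k₁,f) for all k₁, k₂ ∈ Mor(𝐆) and all f ∈ Mor(B). -/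
/-- Let `𝐆` be a categorical group, `B` a category and `η` a twisting
map for `(𝐆, B)` satisfying in addition `η(k·1_a, f) = η(k,f)·1_a` and
`η(1_c·k, f) = 1_c·η(k,f)`.  Then `η` respects the group product of `Mor(𝐆)`:
`η(k₂·k₁, f) = η(k₂,f)·η(k₁,f)` for all `k₁, k₂ ∈ Mor(𝐆)` and `f ∈ Mor(B)`. -/
theorem twist_respects_group_product {OG MG OB MB : Type*}
    [Group OG] [Group MG] (G : CatGroup OG MG) (B : PreCat OB MB)
    (η : MG → MB → MG) (hη : IsTwist G.toPreCat B η)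
    (hη_mul_ide : ∀ (k : MG) (a : OG) (f : MB), η (k * G.ide a) f = η k f * G.ide a)
    (hη_ide_mul : ∀ (c : OG) (k : MG) (f : MB), η (G.ide c * k) f = G.ide c * η k f) :
    ∀ (k₁ k₂ : MG) (f : MB), η (k₂ * k₁) f = η k₂ f * η k₁ f := by
  intro k₁ k₂ f
  set s := G.src k₂ with hs
  set t := G.tgt k₁ with ht
  have hdecomp : k₂ * k₁ = G.comp (k₂ * G.ide t) (G.ide s * k₁) := by
    rw [G.exchange k₁ (G.ide t) (G.ide s) k₂ (by rw [G.tgt_ide]) (by rw [G.src_ide])]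
    rw [hs, ht, G.comp_ide, G.ide_comp]
  have hcomposable : G.src (k₂ * G.ide t) = G.tgt (G.ide s * k₁) := by
    rw [G.src_mul, G.tgt_mul, G.src_ide, G.tgt_ide]
  rw [hdecomp, hη.comp_left _ _ f hcomposable, hη_mul_ide, hη_ide_mul,
    G.exchange (η k₁ f) (G.ide t) (G.ide s) (η k₂ f)
      (by rw [G.tgt_ide, hη.src_eq]) (by rw [G.src_ide, hη.tgt_eq])]
  have h1 : G.comp (η k₂ f) (G.ide s) = η k₂ f := by
    have := G.comp_ide (η k₂ f); rwa [hη.src_eq] at this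
  have h2 : G.comp (G.ide t) (η k₁ f) = η k₁ f := by
    have := G.ide_comp (η k₁ f); rwa [hη.tgt_eq] at this
  rw [h1, h2]
end

section
/- Let G, H, M, V, S, λ and Ψ be as in the twisted field-representation setting, and fix a basepoint p₀ ∈ M. Consider triples (h,g,ψ) ∈ H × G × Ψ, regarded as morphisms with source ψ(g·p₀) ∈ V and target λ_{g·p₀}(h)·ψ(g·p₀) ∈ V, with composition (h₂,g₂,ψ₂) ∘ (h₁,g₁,ψ₁) := (g₁g₂⁻¹h₂ + h₁, g₁, ψ₁), defined whenever ψ₂(g₂·p₀) = λ_{g₁·p₀}(h₁)·ψ₁(g₁·p₀). Then: (a) the target of the composite equals the target of (h₂,g₂,ψ₂), i.e. λ_{g₁·p₀}(g₁g₂⁻¹h₂ + h₁)·ψ₁(g₁·p₀) = λ_{g₂·p₀}(h₂)·ψ₂(g₂·p₀); and (b) composition is associative: (h₃,g₃,ψ₃) ∘ ((h₂,g₂,ψ₂) ∘ (h₁,g₁,ψ₁)) = ((h₃,g₃,ψ₃) ∘ (h₂,g₂,ψ₂)) ∘ (h₁,g₁,ψ₁), both equal to (g₁g₃⁻¹h₃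 + g₁g₂⁻¹h₂ + h₁, g₁, ψ₁), whenever the composites are defined. Hence (adjoining identity morphisms) this data forms a category 𝚿_{p₀} with object set V. -/
/-- In the twisted field-representation setting (group `G` acting on a
set `M`, real vector space `H` with linear `G`-action `α`, complex vector space `V` with
representation `S`, equivariant characters `λ_p : H → ℂ*`, `Ψ = (M → V)`, basepoint
`p₀ ∈ M`), regard a triple `(h,g,ψ) ∈ H × G × Ψ` as a morphism with source `ψ(g·p₀)`
and target `λ_{g·p₀}(h)·ψ(g·p₀)`, and define the composition
`(h₂,g₂,ψ₂)∘(h₁,g₁,ψ₁) := (g₁g₂⁻¹h₂ + h₁, g₁, ψ₁)`, defined whenever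
`ψ₂(g₂·p₀) = λ_{g₁·p₀}(h₁)·ψ₁(g₁·p₀)`.  Then (a) the target of the composite equals
the target of `(h₂,g₂,ψ₂)`, and (b) composition is associative, both iterated
composites being `(g₁g₃⁻¹h₃ + g₁g₂⁻¹h₂ + h₁, g₁, ψ₁)`.  Hence (adjoining identities)
this data forms a category `𝚿_{p₀}` with object set `V`. -/
theorem psi_p0_is_category {G H M V : Type*} [Group G]
    [AddCommGroup H] [Module ℝ H] [MulAction G M]
    [AddCommGroup V] [Module ℂ V]
    (α : G →* (H ≃ₗ[ℝ] H)) (S : G →* (V ≃ₗ[ℂ] V))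
    (lam : M → H → ℂˣ)
    (hlam_add : ∀ (p : M) (h h' : H), lam p (h + h') = lam p h * lam p h')
    (hlam_equiv : ∀ (g : G) (p : M) (h : H), lam (g • p) h = lam p (α g⁻¹ h))
    (p₀ : M) :
    let comp : H × G × (M → V) → H × G × (M → V) → H × G × (M → V) :=
      fun x₂ x₁ => (α (x₁.2.1 * x₂.2.1⁻¹) x₂.1 + x₁.1, x₁.2.1, x₁.2.2)
    -- (a) the target of the composite equals the target of (h₂,g₂,ψ₂)
    (∀ (h₁ h₂ : H) (g₁ g₂ : G) (ψ₁ ψ₂ : M → V),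
      ψ₂ (g₂ • p₀) = (lam (g₁ • p₀) h₁ : ℂ) • ψ₁ (g₁ • p₀) →
      (lam (g₁ • p₀) (α (g₁ * g₂⁻¹) h₂ + h₁) : ℂ) • ψ₁ (g₁ • p₀) =
        (lam (g₂ • p₀) h₂ : ℂ) • ψ₂ (g₂ • p₀)) ∧
    -- (b) composition is associative whenever the composites are defined
    (∀ (h₁ h₂ h₃ : H) (g₁ g₂ g₃ : G) (ψ₁ ψ₂ ψ₃ : M → V),
      ψ₂ (g₂ • p₀) = (lam (g₁ • p₀) h₁ : ℂ) • ψ₁ (g₁ • p₀) →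
      ψ₃ (g₃ • p₀) = (lam (g₂ • p₀) h₂ : ℂ) • ψ₂ (g₂ • p₀) →
      comp (h₃, g₃, ψ₃) (comp (h₂, g₂, ψ₂) (h₁, g₁, ψ₁)) =
          comp (comp (h₃, g₃, ψ₃) (h₂, g₂, ψ₂)) (h₁, g₁, ψ₁) ∧
      comp (h₃, g₃, ψ₃) (comp (h₂, g₂, ψ₂) (h₁, g₁, ψ₁)) =
          (α (g₁ * g₃⁻¹) h₃ + (α (g₁ * g₂⁻¹) h₂ + h₁), g₁, ψ₁)) := by
  intro comp
  constructor
  · intro h₁ h₂ g₁ g₂ ψ₁ ψ₂ hdef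
    have key : lam (g₂ • p₀) h₂ = lam (g₁ • p₀) (α (g₁ * g₂⁻¹) h₂) := by
      have : g₂ • p₀ = (g₂ * g₁⁻¹) • (g₁ • p₀) := by
        rw [smul_smul]; group
      rw [this, hlam_equiv]
      rw [show (g₂ * g₁⁻¹)⁻¹ = g₁ * g₂⁻¹ by group]
    rw [hlam_add, key, hdef, Units.val_mul, mul_smul]
  · intro h₁ h₂ h₃ g₁ g₂ g₃ ψ₁ ψ₂ ψ₃ _ _
    have hα : α (g₁ * g₂⁻¹) (α (g₂ * g₃⁻¹) h₃) = α (g₁ * g₃⁻¹) h₃ := by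
      have := map_mul α (g₁ * g₂⁻¹) (g₂ * g₃⁻¹)
      rw [show (g₁ * g₂⁻¹) * (g₂ * g₃⁻¹) = g₁ * g₃⁻¹ by group] at this
      rw [this]; rfl
    constructor
    · simp only [comp]
      rw [map_add, hα, add_assoc]
    · simp only [comp]
end

section
/- Let G, H, M, V, S, λ, Ψ and p₀ be as in the twisted field-representation setting, and let 𝚿_{p₀} be the category with object set V, morphisms (h,g,ψ) ∈ H × G × Ψ (source ψ(g·p₀), target λ_{g·p₀}(h)·ψ(g·p₀)) and composition (h₂,g₂,ψ₂)∘(h₁,g₁,ψ₁) = (g₁g₂⁻¹h₂ + h₁, g₁, ψ₁). Define η₁(v, (h,g,ψ)) := λ_{g·p₀}(h)·v for v ∈ V, where v is regarded as a morphism of the one-object category 𝐕 whose morphism group is (V,+), and set η₁(v, 1_w) = v for identity morphisms. Then η₁ is a twisting map: (a) η₁(η₁(v, (h₂,g₂,ψ₂)), (h₁,g₁,ψ₁)) = η₁(v, (h₂,g₂,ψ₂)∘(h₁,g₁,ψ₁)) whenever the composite is defined; (b) η₁(v₂, (h,g,ψ)) + η₁(v₁, (h,g,ψ)) = η₁(v₂+v₁,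 (h,g,ψ)); and (c) η₁(0, f) = 0 for every morphism f of 𝚿_{p₀}. Hence η₁ defines a semidirect product category 𝚿₁ = 𝐕 ⋊_{η₁} 𝚿_{p₀} with composition (v₂; h₂,g₂,ψ₂)∘(v₁; h₁,g₁,ψ₁) = (λ_{g₁·p₀}(h₁)·v₂ + v₁; g₁g₂⁻¹h₂ + h₁, g₁, ψ₁). -/
/-- In the twisted field-representation setting with basepoint
`p₀ ∈ M`, let `𝚿_{p₀}` be the category with objects `V`, morphisms
`(h,g,ψ) ∈ H × G × Ψ` (source `ψ(g·p₀)`, target `λ_{g·p₀}(h)·ψ(g·p₀)`) and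
composition `(h₂,g₂,ψ₂)∘(h₁,g₁,ψ₁) = (g₁g₂⁻¹h₂ + h₁, g₁, ψ₁)`.  Define
`η₁(v, (h,g,ψ)) := λ_{g·p₀}(h)·v`, regarding `v ∈ V` as a morphism of the one-object
category `𝐕` with morphism group `(V,+)`.  Then `η₁` is a twisting map:
(a) `η₁(η₁(v,f₂),f₁) = η₁(v, f₂∘f₁)` whenever the composite is defined;
(b) `η₁` is additive in `v`; (c) `η₁(0,f) = 0`.  Hence `η₁` defines the semidirect
product category `𝚿₁ = 𝐕 ⋊_{η₁} 𝚿_{p₀}`, with the indicated composition. -/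
theorem eta1_is_twist {G H M V : Type*} [Group G]
    [AddCommGroup H] [Module ℝ H] [MulAction G M]
    [AddCommGroup V] [Module ℂ V]
    (α : G →* (H ≃ₗ[ℝ] H)) (S : G →* (V ≃ₗ[ℂ] V))
    (lam : M → H → ℂˣ)
    (hlam_add : ∀ (p : M) (h h' : H), lam p (h + h') = lam p h * lam p h')
    (hlam_equiv : ∀ (g : G) (p : M) (h : H), lam (g • p) h = lam p (α g⁻¹ h))
    (p₀ : M) :
    let comp : H × G × (M → V) → H × G × (M → V) → H × G × (M → V) :=
      fun x₂ x₁ => (α (x₁.2.1 * x₂.2.1⁻¹) x₂.1 + x₁.1, x₁.2.1, x₁.2.2)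
    let η₁ : V → H × G × (M → V) → V :=
      fun v x => (lam (x.2.1 • p₀) x.1 : ℂ) • v
    -- (a) right-action property on composable morphisms
    (∀ (v : V) (h₁ h₂ : H) (g₁ g₂ : G) (ψ₁ ψ₂ : M → V),
      ψ₂ (g₂ • p₀) = (lam (g₁ • p₀) h₁ : ℂ) • ψ₁ (g₁ • p₀) →
      η₁ (η₁ v (h₂, g₂, ψ₂)) (h₁, g₁, ψ₁) =
        η₁ v (comp (h₂, g₂, ψ₂) (h₁, g₁, ψ₁))) ∧
    -- (b) additivity in v
    (∀ (v₁ v₂ : V) (x : H × G × (M → V)), η₁ v₂ x + η₁ v₁ x = η₁ (v₂ + v₁) x) ∧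
    -- (c) η₁(0, f) = 0
    (∀ x : H × G × (M → V), η₁ (0 : V) x = 0) ∧
    -- the composition law of 𝚿₁ = 𝐕 ⋊_{η₁} 𝚿_{p₀}
    (∀ (v₁ v₂ : V) (h₁ h₂ : H) (g₁ g₂ : G) (ψ₁ ψ₂ : M → V),
      ((η₁ v₂ (h₁, g₁, ψ₁) + v₁, comp (h₂, g₂, ψ₂) (h₁, g₁, ψ₁)) :
          V × H × G × (M → V)) =
        ((lam (g₁ • p₀) h₁ : ℂ) • v₂ + v₁,
          (α (g₁ * g₂⁻¹) h₂ + h₁, g₁, ψ₁))) := by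
  
  intro comp η₁
  refine ⟨?_, ?_, ?_, ?_⟩
  · intro v h₁ h₂ g₁ g₂ ψ₁ ψ₂ _
    have key : lam (g₁ • p₀) (α (g₁ * g₂⁻¹) h₂) = lam (g₂ • p₀) h₂ := by
      have h1 := hlam_equiv (g₁ * g₂⁻¹) (g₂ • p₀) (α (g₁ * g₂⁻¹) h₂)
      have h2 : (g₁ * g₂⁻¹) • (g₂ • p₀) = g₁ • p₀ := by
        rw [smul_smul]; group
      have h3 : α (g₁ * g₂⁻¹)⁻¹ (α (g₁ * g₂⁻¹) h₂) = h₂ := by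
        have := congrArg (fun f : H ≃ₗ[ℝ] H => f h₂)
          (map_mul α (g₁ * g₂⁻¹)⁻¹ (g₁ * g₂⁻¹))
        simp only [inv_mul_cancel, map_one] at this
        simpa using this.symm
      rw [h2, h3] at h1
      exact h1
    simp only [η₁, comp, smul_smul, hlam_add, key]
    push_cast
    ring_nf
  · intro v₁ v₂ x
    simp [η₁, smul_add]
  · intro x
    simp [η₁]
  · intro v₁ v₂ h₁ h₂ g₁ g₂ ψ₁ ψ₂
    rfl
end

section
/- Let G, H, M, V, S, λ, Ψ, p₀ be as in the twisted field-representation setting, and let 𝚿₁ = 𝐕 ⋊_{η₁} 𝚿_{p₀} be the category with objects V and (non-identity) morphisms (v; h,g,ψ) ∈ V × (H × G × Ψ), source ψ(g·p₀), target λ_{g·p₀}(h)·ψ(g·p₀), and composition (v₂; h₂,g₂,ψ₂)∘(v₁; h₁,g₁,ψ₁) = (λ_{g₁·p₀}(h₁)·v₂ + v₁; g₁g₂⁻¹h₂ + h₁, g₁, ψ₁). Let 𝐕×_S 𝐆_d be the categorical group with object group G and morphism group V ⋊_S G (product (v₂,g₂)(v₁,g₁) = (v₂ + S(g₂)v₁,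 g₂g₁); source and target of (v,g) both g; composition (v₂,g)∘(v₁,g) = (v₂+v₁, g)). Define η₂((v',g'), (v; h,g,ψ)) := (λ_{g·p₀}(h)·v', g') and η₂((v',g'), 1_a) = (v',g'); and define ρ on objects by ρ(g', v) = S(g')v and on morphisms by ρ((v',g'), (v; h,g,ψ)) := (S(g')v − v'; g'h, g'g, g'·ψ), where (g'·ψ)(p) := S(g')(ψ(g'⁻¹·p)). Then: (a) η₂ is a twisting map for (𝐕×_S 𝐆_d, 𝚿₁); (b) ρ preserves sources and targets; (c) ρ((v'',g'')(v',g'), x) = ρ((v'',g''), ρ((v',g'), x)) for all morphisms x of 𝚿₁; and (d) the twisted functoriality holds: ρ((v₂',g₂'), f₂) ∘ ρ((v₁',g₁'), f₁) = ρ(η₂((v₂',g₂'), f₁) ∘ (v₁',g₁'), f₂ ∘ f₁) whenever g₂' = g₁' and f₂ ∘ f₁ is defined. Hence ρ is an η₂-twisted representation of 𝐕×_S 𝐆_d on 𝚿₁. -/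
/-- In the twisted field-representation setting with basepoint `p₀`,
let `𝚿₁ = 𝐕 ⋊_{η₁} 𝚿_{p₀}` be the category with objects `V` and (non-identity)
morphisms `(v; h,g,ψ) ∈ V × (H × G × Ψ)` (source `ψ(g·p₀)`, target
`λ_{g·p₀}(h)·ψ(g·p₀)`, composition
`(v₂;h₂,g₂,ψ₂)∘(v₁;h₁,g₁,ψ₁) = (λ_{g₁·p₀}(h₁)·v₂ + v₁; g₁g₂⁻¹h₂+h₁, g₁, ψ₁)`), and
let `𝐕×_S 𝐆_d` be the categorical group with object group `G` and morphism group
`V ⋊_S G` (product `(v₂,g₂)(v₁,g₁) = (v₂ + S(g₂)v₁, g₂g₁)`, source and target of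
`(v,g)` both `g`, composition `(v₂,g)∘(v₁,g) = (v₂+v₁, g)`).  Define
`η₂((v',g'), (v;h,g,ψ)) = (λ_{g·p₀}(h)·v', g')` and
`ρ((v',g'), (v;h,g,ψ)) = (S(g')v − v'; g'h, g'g, g'·ψ)` with
`(g'·ψ)(p) = S(g')(ψ(g'⁻¹·p))`.  Then (a) `η₂` is a twisting map, (b) `ρ` preserves
sources and targets, (c) `ρ` is an action of the morphism group, and (d) the twisted
functoriality holds; hence `ρ` is an `η₂`-twisted representation of `𝐕×_S 𝐆_d` on
`𝚿₁`. -/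
theorem eta2_twisted_representation {G H M V : Type*} [Group G]
    [AddCommGroup H] [Module ℝ H] [MulAction G M]
    [AddCommGroup V] [Module ℂ V]
    (α : G →* (H ≃ₗ[ℝ] H)) (S : G →* (V ≃ₗ[ℂ] V))
    (lam : M → H → ℂˣ)
    (hlam_add : ∀ (p : M) (h h' : H), lam p (h + h') = lam p h * lam p h')
    (hlam_equiv : ∀ (g : G) (p : M) (h : H), lam (g • p) h = lam p (α g⁻¹ h))
    (p₀ : M) :
    -- source and target maps of 𝚿₁
    let srcΨ : V × (H × G × (M → V)) → V := fun x => x.2.2.2 (x.2.2.1 • p₀)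
    let tgtΨ : V × (H × G × (M → V)) → V :=
      fun x => (lam (x.2.2.1 • p₀) x.2.1 : ℂ) • x.2.2.2 (x.2.2.1 • p₀)
    -- composition in 𝚿₁
    let comp₁ : V × (H × G × (M → V)) → V × (H × G × (M → V)) → V × (H × G × (M → V)) :=
      fun x₂ x₁ => ((lam (x₁.2.2.1 • p₀) x₁.2.1 : ℂ) • x₂.1 + x₁.1,
        (α (x₁.2.2.1 * x₂.2.2.1⁻¹) x₂.2.1 + x₁.2.1, x₁.2.2.1, x₁.2.2.2))
    -- group product in Mor(𝐕×_S 𝐆_d) = V ⋊_S G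
    let mulVG : V × G → V × G → V × G := fun a b => (a.1 + S a.2 b.1, a.2 * b.2)
    -- the twist η₂
    let η₂ : V × G → V × (H × G × (M → V)) → V × G :=
      fun k x => ((lam (x.2.2.1 • p₀) x.2.1 : ℂ) • k.1, k.2)
    -- ρ on morphisms
    let ρm : V × G → V × (H × G × (M → V)) → V × (H × G × (M → V)) :=
      fun k x => (S k.2 x.1 - k.1,
        (α k.2 x.2.1, k.2 * x.2.2.1, fun p => S k.2 (x.2.2.2 (k.2⁻¹ • p))))
    -- (a) η₂ is a twisting map
    (∀ (k : V × G) (x₁ x₂ : V × (H × G × (M → V))), srcΨ x₂ = tgtΨ x₁ →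
      η₂ k (comp₁ x₂ x₁) = η₂ (η₂ k x₂) x₁) ∧
    (∀ (v₁' v₂' : V) (g' : G) (x : V × (H × G × (M → V))),
      η₂ (v₂' + v₁', g') x = ((η₂ (v₂', g') x).1 + (η₂ (v₁', g') x).1, g')) ∧
    (∀ (g' : G) (x : V × (H × G × (M → V))), η₂ (0, g') x = (0, g')) ∧
    -- (b) ρ preserves sources and targets
    (∀ (k : V × G) (x : V × (H × G × (M → V))),
      srcΨ (ρm k x) = S k.2 (srcΨ x) ∧ tgtΨ (ρm k x) = S k.2 (tgtΨ x)) ∧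
    -- (c) ρ is an action of the morphism group V ⋊_S G
    (∀ (k k' : V × G) (x : V × (H × G × (M → V))),
      ρm (mulVG k' k) x = ρm k' (ρm k x)) ∧
    (∀ x : V × (H × G × (M → V)), ρm (0, 1) x = x) ∧
    -- (d) the twisted functoriality
    (∀ (v₁' v₂' : V) (g' : G) (x₁ x₂ : V × (H × G × (M → V))),
      srcΨ x₂ = tgtΨ x₁ →
      comp₁ (ρm (v₂', g') x₂) (ρm (v₁', g') x₁) =
        ρm ((lam (x₁.2.2.1 • p₀) x₁.2.1 : ℂ) • v₂' + v₁', g') (comp₁ x₂ x₁)) := by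
  intro srcΨ tgtΨ comp₁ mulVG η₂ ρm
  have mulα : ∀ (a b : G) (h : H), α a (α b h) = α (a * b) h := by
    intro a b h; rw [map_mul]; rfl
  have key : ∀ (g' g : G) (h : H), lam ((g' * g) • p₀) (α g' h) = lam (g • p₀) h := by
    intro g' g h
    rw [mul_smul, hlam_equiv]
    congr 1
    rw [mulα, inv_mul_cancel, map_one]; rfl
  have key2 : ∀ (g₁ g₂ : G) (h : H), lam (g₁ • p₀) (α (g₁ * g₂⁻¹) h) = lam (g₂ • p₀) h := by
    intro g₁ g₂ h
    have := key (g₁ * g₂⁻¹) g₂ h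
    rwa [inv_mul_cancel_right] at this
  refine ⟨?_, ?_, ?_, ?_, ?_, ?_, ?_⟩
  · -- (a1)
    intro k x₁ x₂ _
    simp only [η₂, comp₁, hlam_add, key2, Units.val_mul, mul_smul, Prod.mk.injEq]
    exact ⟨smul_comm _ _ _, trivial⟩
  · -- (a2)
    intro v₁' v₂' g' x
    simp only [η₂, smul_add]
  · -- (a3)
    intro g' x
    simp only [η₂, smul_zero]
  · -- (b)
    intro k x
    constructor
    · simp only [srcΨ, ρm, mul_smul, inv_smul_smul]
    · have key' : ∀ (g' g : G) (h : H), lam (g' • g • p₀) (α g' h) = lam (g • p₀) h := by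
        intro g' g h; rw [← mul_smul]; exact key g' g h
      simp only [tgtΨ, ρm, mul_smul, inv_smul_smul, key', map_smul]
  · -- (c)
    intro k k' x
    simp only [ρm, mulVG, Prod.mk.injEq]
    refine ⟨?_, ?_, ?_, ?_⟩
    · rw [map_mul]
      show (S k'.2) ((S k.2) x.1) - _ = _
      rw [map_sub]; abel
    · rw [mulα]
    · rw [mul_assoc]
    · funext p
      rw [map_mul]
      show (S k'.2) ((S k.2) _) = _
      rw [mul_inv_rev, mul_smul]
  · -- identity
    intro x
    simp only [ρm, map_one, sub_zero, one_mul, inv_one, one_smul]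
    exact rfl
  · -- (d)
    intro v₁' v₂' g' x₁ x₂ _
    have e : (g' * x₁.2.2.1) * (g' * x₂.2.2.1)⁻¹ * g' = g' * (x₁.2.2.1 * x₂.2.2.1⁻¹) := by
      group
    simp only [ρm, comp₁, key, map_add, map_smul, smul_sub]
    refine Prod.ext ?_ (Prod.ext ?_ rfl)
    · abel
    · rw [mulα, mulα, e]
end

section
/- Let (G,H,α,τ) be a crossed module with associated categorical group 𝐆 (source s(h,g) = g, target t(h,g) = τ(h)g). Let 𝔽 be a field, V and W vector spaces over 𝔽, and τ₀ : W → V a linear map; let 𝐕 be the categorical vector space with object space V, morphism space W × V, source s(w,v) = v, target t(w,v) = τ₀(w) + v, identity 1_v = (0,v), and composition (w₂,v₂)∘(w₁,v₁) = (w₂+w₁, v₁) when v₂ = τ₀(w₁)+v₁. Let ρ be a representation of 𝐆 on 𝐕: a map ρ on objects giving a linear action of G on V (ρ(e) = id, ρ(g₂)∘ρ(g₁) = ρ(g₂g₁)) and a map ρ on morphisms giving a linear action of K = H ⋊_α G on W × V (ρ(1_e) = id, ρ(k₂)∘ρ(k₁) = ρ(k₂k₁)), such that s(ρ(k)x) =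 ρ(s(k))(s(x)), t(ρ(k)x) = ρ(t(k))(t(x)), ρ(1_g)(1_v) = 1_{ρ(g)v}, and ρ(k₂∘k₁)(x₂∘x₁) = ρ(k₂)(x₂) ∘ ρ(k₁)(x₁) whenever the composites k₂∘k₁ and x₂∘x₁ are defined. Then: (i) the subspace W × {0} is invariant under every ρ(k), so each k ∈ K induces a linear map ρ₀(k) on W via ρ(k)(w,0) = (ρ₀(k)w, 0); (ii) ρ₀(k) depends only on the target of k, i.e. ρ₀(k) = ρ₀(1_{t(k)}) for every k ∈ K, so b ↦ ρ₀(1_b) is a representation of G on W; and (iii) τ₀ intertwines ρ₀ with the action of G on V: τ₀(ρ₀(1_b)w) = ρ(b)(τ₀(w)) for all b ∈ G and w ∈ W. -/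
/-- Let `(G,H,α,τ)` be a crossed module with associated categorical
group (morphism group `K = H ⋊_α G`, source `s(h,g) = g`, target `t(h,g) = τ(h)g`,
identity `1_g = (1,g)`, composition `(h',g')∘(h,g) = (h'h, g)` when `g' = τ(h)g`).
Let `𝐕` be the categorical vector space over a field `𝔽` determined by vector spaces
`V`, `W` and a linear map `τ₀ : W → V`: objects `V`, morphisms `W × V`, `s(w,v) = v`,
`t(w,v) = τ₀(w)+v`, `1_v = (0,v)`, composition `(w₂,v₂)∘(w₁,v₁) = (w₂+w₁, v₁)` when
`v₂ = τ₀(w₁)+v₁`.  Let `ρ` be a representation of the categorical group on `𝐕` (linear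
actions `ρo` of `G` on `V` and `ρm` of `K` on `W × V` forming a functor).  Then:
(i) the subspace `W × {0}` is invariant under every `ρ(k)`, and each `k` induces a
linear map `w ↦ (ρm k (w,0)).1` on `W`; (ii) this induced map depends only on the
target of `k`, so `b ↦ ρ₀(1_b)` is a representation of `G` on `W`; and (iii) `τ₀`
intertwines `ρ₀` with the action of `G` on `V`. -/
theorem rep_on_categorical_vector_space {G H : Type*} [Group G] [Group H]
    {𝔽 V W : Type*} [Field 𝔽] [AddCommGroup V] [Module 𝔽 V]
    [AddCommGroup W] [Module 𝔽 W]
    (α : G →* MulAut H) (τ : H →* G)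
    (peiffer1 : ∀ (g : G) (h : H), τ (α g h) = g * τ h * g⁻¹)
    (peiffer2 : ∀ h h' : H, α (τ h) h' = h * h' * h⁻¹)
    (τ₀ : W →ₗ[𝔽] V)
    (ρo : G → V → V) (ρm : H × G → W × V → W × V)
    -- ρ is an action on objects, linear on objects
    (hρo_one : ∀ v : V, ρo 1 v = v)
    (hρo_mul : ∀ (g₂ g₁ : G) (v : V), ρo (g₂ * g₁) v = ρo g₂ (ρo g₁ v))
    (hρo_lin : ∀ g : G, IsLinearMap 𝔽 (ρo g))
    -- ρ is an action of the morphism group K = H ⋊_α G, linear on morphisms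
    (hρm_one : ∀ x : W × V, ρm (1, 1) x = x)
    (hρm_mul : ∀ (k₂ k₁ : H × G) (x : W × V),
      ρm (k₂.1 * α k₂.2 k₁.1, k₂.2 * k₁.2) x = ρm k₂ (ρm k₁ x))
    (hρm_lin : ∀ k : H × G, IsLinearMap 𝔽 (ρm k))
    -- ρ is a functor: it respects source, target, identities, and composition
    (hsrc : ∀ (h : H) (g : G) (w : W) (v : V), (ρm (h, g) (w, v)).2 = ρo g v)
    (htgt : ∀ (h : H) (g : G) (w : W) (v : V),
      τ₀ (ρm (h, g) (w, v)).1 + (ρm (h, g) (w, v)).2 = ρo (τ h * g) (τ₀ w + v))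
    (hide : ∀ (g : G) (v : V), ρm (1, g) ((0 : W), v) = (0, ρo g v))
    (hcomp : ∀ (h₁ h₂ : H) (g₁ g₂ : G) (w₁ w₂ : W) (v₁ v₂ : V),
      g₂ = τ h₁ * g₁ → v₂ = τ₀ w₁ + v₁ →
      ρm (h₂ * h₁, g₁) (w₂ + w₁, v₁) =
        ((ρm (h₂, g₂) (w₂, v₂)).1 + (ρm (h₁, g₁) (w₁, v₁)).1,
          (ρm (h₁, g₁) (w₁, v₁)).2)) :
    -- (i) W × {0} is invariant and ρ₀(k) := (ρm k (·,0)).1 is linear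
    ((∀ (k : H × G) (w : W), (ρm k (w, (0 : V))).2 = 0) ∧
      (∀ k : H × G, IsLinearMap 𝔽 (fun w : W => (ρm k (w, (0 : V))).1))) ∧
    -- (ii) ρ₀(k) depends only on the target of k, and b ↦ ρ₀(1_b) is a representation
    ((∀ (h : H) (g : G) (w : W),
        (ρm (h, g) (w, (0 : V))).1 = (ρm ((1 : H), τ h * g) (w, (0 : V))).1) ∧
      (∀ w : W, (ρm ((1 : H), (1 : G)) (w, (0 : V))).1 = w) ∧
      (∀ (b₂ b₁ : G) (w : W),
        (ρm ((1 : H), b₂ * b₁) (w, (0 : V))).1 =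
          (ρm ((1 : H), b₂) ((ρm ((1 : H), b₁) (w, (0 : V))).1, (0 : V))).1)) ∧
    -- (iii) τ₀ intertwines ρ₀ with the action of G on V
    (∀ (b : G) (w : W),
      τ₀ ((ρm ((1 : H), b) (w, (0 : V))).1) = ρo b (τ₀ w)) := by
  have h2zero : ∀ (k : H × G) (w : W), (ρm k (w, (0 : V))).2 = 0 := by
    intro ⟨h, g⟩ w
    rw [hsrc, (hρo_lin g).map_zero]
  have hzero : ∀ k : H × G, ρm k ((0 : W), (0 : V)) = 0 := fun k => (hρm_lin k).map_zero
  refine ⟨⟨h2zero, ?_⟩, ⟨?_, ?_, ?_⟩, ?_⟩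
  · intro k
    constructor
    · intro w w'
      have e : ((w + w', (0 : V)) : W × V) = (w, 0) + (w', 0) := by
        simp [Prod.ext_iff]
      rw [e, (hρm_lin k).map_add]; rfl
    · intro c w
      have e : ((c • w, (0 : V)) : W × V) = c • ((w, 0) : W × V) := by
        simp [Prod.ext_iff]
      rw [e, (hρm_lin k).map_smul]; rfl
  · intro h g w
    have key := hcomp h 1 g (τ h * g) 0 w 0 (τ₀ 0 + 0) rfl rfl
    simp only [one_mul, add_zero, map_zero, zero_add] at key
    rw [key, hzero]
    simp
  · intro w
    rw [hρm_one]
  · intro b₂ b₁ w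
    have key := hρm_mul (1, b₂) (1, b₁) (w, (0 : V))
    simp only [map_one, one_mul] at key
    have e : ρm ((1 : H), b₁) (w, (0 : V)) = ((ρm ((1 : H), b₁) (w, (0 : V))).1, (0 : V)) := by
      rw [Prod.ext_iff]
      exact ⟨rfl, h2zero _ w⟩
    rw [key, e]
  · intro b w
    have key := htgt 1 b w 0
    rw [map_one, one_mul, add_zero, h2zero ((1 : H), b) w, add_zero] at key
    exact key
end
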